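/- arXiv:2605.16096 — 2 statements merged into one kernel-verified Lean document; each statement's English description precedes it below -/
import Mathlib

section
/- Let X be a median algebra and let u ≠ v be such that that interval [u,v] is a chain (linearly ordered by ≤_u, where x ≤_u y iff m(u,x,y)=x). Define the branch B^u_v := {x ∈ X : m(u,x,v) ≠ v}. Then B^u_v and its complement S^u_v := {x : m(u,x,v)=v} are both convex subsets of X; i.e., B^u_v is a halfspace. -/
/-- A median algebra: a set with a ternary operation `m` that is symmetric
(generated by the two transpositions), satisfies `m a b b = b`, and
`m (m a b d) c d = m (m a c d) b d`. -/
structure MedianAlgebra (X : Type*) where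
  m : X → X → X → X
  swap12 : ∀ a b c, m a b c = m b a c
  swap23 : ∀ a b c, m a b c = m a c b
  absorb : ∀ a b, m a b b = b
  med_assoc : ∀ a b c d, m (m a b d) c d = m (m a c d) b d

namespace MedianAlgebra

variable {X : Type*}

/-- The median interval `[a,b] = {c : m a c b = c}`. -/
def interval (M : MedianAlgebra X) (a b : X) : Set X := {c | M.m a c b = c}

/-- A subset is convex if it contains the interval between any two of its points. -/
def IsConvex (M : MedianAlgebra X) (C : Set X) : Prop :=
  ∀ x ∈ C, ∀ y ∈ C, M.interval x y ⊆ C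

/-- The shadow `S^a_b = {w : m a w b = b}` (i.e. `b ∈ [a,w]`). -/
def shadow (M : MedianAlgebra X) (a b : X) : Set X := {w | M.m a w b = b}

/-- The branch `B^a_b = {w : m a w b ≠ b}`, complement of the shadow. -/
def branch (M : MedianAlgebra X) (a b : X) : Set X := {w | M.m a w b ≠ b}

/-- The relation `x ≤_u y` iff `m u x y = x`. -/
def leI (M : MedianAlgebra X) (u x y : X) : Prop := M.m u x y = x

/-- `[u,v]` is a chain interval: `≤_u` is total on `[u,v]` and the
order-median induced by `≤_u` agrees with `m` on `[u,v]`. -/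
def IsChainInterval (M : MedianAlgebra X) (u v : X) : Prop :=
  (∀ x ∈ M.interval u v, ∀ y ∈ M.interval u v, M.leI u x y ∨ M.leI u y x) ∧
  (∀ x ∈ M.interval u v, ∀ y ∈ M.interval u v, ∀ z ∈ M.interval u v,
      M.leI u x y → M.leI u y z → M.m x y z = y)

end MedianAlgebra

open MedianAlgebra

/-! For a base point `b`, `m b · ·` is the meet of the semilattice order `≤_b` (`leI b`), and every
point of `[x,y]` lies `≥_b` the meet of `x` and `y`. The shadow `S^u_v = {w | v ≤_u w}` is therefore
convex, being closed under meets and upward closed. For the branch work at base `v`: if `z ∈ [x,y]`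
lies in `S^u_v`, i.e. `u ⊓_v z = v`, then also `u ⊓_v (x ⊓_v y) = v`, and this is the meet of the
gates `m u x v` and `m u y v`. In the chain `[u,v]` the meet of two points is one of them, so one
of the gates equals `v`, i.e. `x` or `y` lies in `S^u_v`. -/

namespace MedianAlgebra

variable {X : Type*} (M : MedianAlgebra X)

theorem m_self_mid (a b : X) : M.m a b a = a :=
  (M.swap12 a b a).trans (M.absorb b a)

theorem m_self_left (a b : X) : M.m a a b = a :=
  (M.swap23 a a b).trans (M.m_self_mid a b)

/- `simp only [M.swap12, M.swap23]` sorts the arguments of `m` by ordered rewriting, so it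
identifies any two terms that differ by permuting arguments. -/

theorem m_assoc (b x y z : X) : M.m b (M.m b x y) z = M.m b x (M.m b y z) := by
  have := M.med_assoc y x z b
  simp only [M.swap12, M.swap23] at this ⊢
  exact this

theorem m_m_distrib_left (b a x y : X) :
    M.m b a (M.m b x y) = M.m b (M.m b a x) (M.m b a y) := by
  rw [M.m_assoc, ← M.m_assoc b x a y, M.swap23 b x a, M.m_assoc, ← M.m_assoc b a a,
    M.absorb]

theorem mem_interval_m (u v w : X) : M.m u w v ∈ M.interval u v := by
  have := M.med_assoc u w u v
  rw [M.m_self_left] at this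
  show M.m u (M.m u w v) v = M.m u w v
  simp only [M.swap12, M.swap23] at this ⊢
  exact this

variable {M}

theorem leI_m_right (b x y : X) : M.leI b (M.m b x y) y := by
  rw [leI, M.m_assoc, M.absorb]

theorem leI.trans {b x y z : X} (hxy : M.leI b x y) (hyz : M.leI b y z) : M.leI b x z := by
  rw [leI, ← hxy, M.m_assoc, hyz]

theorem leI_m_of_leI {b a x y : X} (hx : M.leI b a x) (hy : M.leI b a y) :
    M.leI b a (M.m b x y) := by
  rw [leI, ← M.m_assoc, hx, hy]

theorem leI_m_of_mem_interval {b x y z : X} (hz : z ∈ M.interval x y) :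
    M.leI b (M.m b x y) z := by
  set p := M.m b x y
  have hpy : M.m b p y = p := leI_m_right b x y
  have hyz : M.m b y z = M.m y z p := by
    calc M.m b y z = M.m (M.m x z y) b y := by rw [hz]; simp only [M.swap12, M.swap23]
      _ = M.m (M.m x b y) z y := M.med_assoc x z b y
      _ = M.m y z p := by simp only [p, M.swap12, M.swap23]
  calc M.m b p z = M.m b p (M.m y z p) := by rw [← hpy, M.m_assoc, hpy, hyz]
    _ = M.m (M.m y b p) z p := by
        rw [← M.med_assoc]; simp only [M.swap12, M.swap23]
    _ = p := by
        rw [M.swap12 y b, M.swap23 b y, hpy, M.m_self_mid]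

theorem m_eq_base_of_leI {b a w z : X} (haz : M.m b a z = b) (hwz : M.leI b w z) :
    M.m b a w = b := by
  rw [← hwz, ← M.m_assoc, M.swap23 b a w, M.m_assoc, haz, M.m_self_mid]

theorem mem_shadow_iff_leI {u v w : X} : w ∈ M.shadow u v ↔ M.leI u v w := by
  show M.m u w v = v ↔ M.m u v w = v
  rw [M.swap23]

theorem isConvex_shadow (u v : X) : M.IsConvex (M.shadow u v) := by
  intro x hx y hy z hz
  rw [mem_shadow_iff_leI] at hx hy ⊢
  exact (leI_m_of_leI hx hy).trans (leI_m_of_mem_interval hz)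

theorem IsChainInterval.m_eq_or_eq {u v a b : X} (hch : M.IsChainInterval u v)
    (ha : a ∈ M.interval u v) (hb : b ∈ M.interval u v) :
    M.m a b v = a ∨ M.m a b v = b := by
  have hv : v ∈ M.interval u v := M.absorb u v
  rcases hch.1 a ha b hb with hab | hba
  · exact Or.inr (hch.2 a ha b hb v hv hab hb)
  · exact Or.inl ((M.swap12 a b v).trans (hch.2 b hb a ha v hv hba ha))

theorem isConvex_branch {u v : X} (hch : M.IsChainInterval u v) :
    M.IsConvex (M.branch u v) := by
  intro x hx y hy z hz hzb
  have hzs : M.m v u z = v := by simpa only [M.swap12, M.swap23] using hzb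
  have hgates : M.m (M.m u x v) (M.m u y v) v = v := by
    calc M.m (M.m u x v) (M.m u y v) v = M.m v u (M.m v x y) := by
          rw [M.m_m_distrib_left]; simp only [M.swap12, M.swap23]
      _ = v := m_eq_base_of_leI hzs (leI_m_of_mem_interval hz)
  rcases hch.m_eq_or_eq (M.mem_interval_m u v x) (M.mem_interval_m u v y) with h | h
  · exact hx (h.symm.trans hgates)
  · exact hy (h.symm.trans hgates)

end MedianAlgebra

theorem branch_isHalfspace_general {X : Type*} (M : MedianAlgebra X) (u v : X)
    (hch : M.IsChainInterval u v) :
    M.IsConvex (M.branch u v) ∧ M.IsConvex (M.shadow u v) :=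
  ⟨isConvex_branch hch, isConvex_shadow u v⟩

/-- If `[u,v]` is a nontrivial chain interval then the branch `B^u_v` and its
complementary shadow `S^u_v` are both convex, i.e. `B^u_v` is a halfspace. -/
theorem branch_isHalfspace {X : Type*} (M : MedianAlgebra X) (u v : X)
    (huv : u ≠ v) (hch : M.IsChainInterval u v) :
    M.IsConvex (M.branch u v) ∧ M.IsConvex (M.shadow u v) :=
  branch_isHalfspace_general M u v hch
end

section
/- Let X be a median algebra and [u,v] a chain interval ordered by ≤_u. For c,d ∈ [u,v], the preimages under the gate retraction φ_{u,v}(z)=m(u,z,v) of the open rays satisfy: φ_{u,v}^{-1}({t ∈ [u,v] : t <_u d}) = B^u_d and φ_{u,v}^{-1}({t ∈ [u,v] : c <_u t}) = B^v_c. -/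
/-!
Both identities are pulled back along the gate `t = m u z v`: for `d ∈ [u,v]` the median
identity gives `m u t d = m u z d` and `m v t d = m v z d`, so membership of `z` in `B^u_d`
or `B^v_c` depends only on `t`. On the chain, `t <_u d` holds exactly when `m u t d = t ≠ d`,
and `c <_u t` exactly when `m v t c = t ≠ c`, the latter because `c ≤_u t ≤_u v` makes `t`
the median of `c, t, v`.
-/

namespace MedianAlgebra

variable {X : Type*} (M : MedianAlgebra X)

lemma swap13 (a b c : X) : M.m a b c = M.m c b a := by
  rw [M.swap23, M.swap12, M.swap23]

variable {M}

lemma mem_interval_comm {u v d : X} (hd : d ∈ M.interval u v) : d ∈ M.interval v u :=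
  (M.swap13 v d u).trans hd

lemma m_gate_left {u v d : X} (hd : d ∈ M.interval u v) (z : X) :
    M.m u (M.m u z v) d = M.m u z d := by
  have h := M.med_assoc v z d u
  rw [mem_interval_comm hd, M.swap13 v z u] at h
  calc M.m u (M.m u z v) d = M.m (M.m u z v) d u := by rw [M.swap23, M.swap13]
    _ = M.m d z u := h
    _ = M.m u z d := M.swap13 _ _ _

lemma m_gate_right {u v d : X} (hd : d ∈ M.interval u v) (z : X) :
    M.m v (M.m u z v) d = M.m v z d := by
  simpa only [M.swap13 v z u] using m_gate_left (mem_interval_comm hd) z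

lemma gate_mem_interval (u v z : X) : M.m u z v ∈ M.interval u v :=
  m_gate_left (M.absorb u v) z

lemma leI_and_ne_iff_of_total {u t d : X} (htot : M.leI u t d ∨ M.leI u d t) :
    M.leI u t d ∧ t ≠ d ↔ M.m u t d ≠ d := by
  constructor
  · rintro ⟨htd, hne⟩
    rwa [htd]
  · intro h
    rcases htot with htd | hdt
    · refine ⟨htd, ?_⟩
      rintro rfl
      exact h (M.absorb u t)
    · exact absurd ((M.swap23 u t d).trans hdt) h

lemma IsChainInterval.leI_and_ne_iff {u v c t : X} (hch : M.IsChainInterval u v)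
    (hc : c ∈ M.interval u v) (ht : t ∈ M.interval u v) :
    M.leI u c t ∧ t ≠ c ↔ M.m v t c ≠ c := by
  have hv : v ∈ M.interval u v := M.absorb u v
  constructor
  · rintro ⟨hct, hne⟩
    rwa [M.swap13, hch.2 c hc t ht v hv hct ht]
  · intro h
    rcases hch.1 c hc t ht with hct | htc
    · refine ⟨hct, ?_⟩
      rintro rfl
      exact h (M.absorb v t)
    · refine absurd ?_ h
      rw [M.swap23, M.swap13]
      exact hch.2 t ht c hc v hv htc hc

end MedianAlgebra

open MedianAlgebra

/-- Preimages of the open rays of a chain interval under the gate retraction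
are branches: `φ_{u,v}⁻¹({t : t <_u d}) = B^u_d` and
`φ_{u,v}⁻¹({t : c <_u t}) = B^v_c`. -/
theorem preimage_rays_eq_branches {X : Type*} (M : MedianAlgebra X) (u v c d : X)
    (hch : M.IsChainInterval u v)
    (hc : c ∈ M.interval u v) (hd : d ∈ M.interval u v) :
    {z : X | M.leI u (M.m u z v) d ∧ M.m u z v ≠ d} = M.branch u d ∧
    {z : X | M.leI u c (M.m u z v) ∧ M.m u z v ≠ c} = M.branch v c := by
  have ht (z : X) : M.m u z v ∈ M.interval u v := gate_mem_interval u v z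
  constructor <;> ext z
  · rw [Set.mem_ofPred_eq, leI_and_ne_iff_of_total (hch.1 _ (ht z) d hd), m_gate_left hd]
    rfl
  · rw [Set.mem_ofPred_eq, hch.leI_and_ne_iff hc (ht z), m_gate_right hc]
    rfl
end
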